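/- Let I be an independence model over a finite vertex set V. If G_F is a maximal ancestral graph (MAG) over V satisfying the Markov and Faithfulness assumptions with I, and G is a MAG over V satisfying the Markov assumption with I that is NoI-minimal with I, then G and G_F entail exactly the same m-separation statements: for all pairwise disjoint X,Y,Z ⊆ V with X,Y nonempty, X and Y are m-separated by Z in G if and only if they are m-separated by Z in G_F. In particular, G satisfies the Faithfulness assumption with I. -/

import Mathlib

/-- The kind of an edge as traversed from left to right along a path:
forward directed (`a → b`), backward directed (`a ← b`), or bidirected (`a ↔ b`). -/
inductive EKind : Type
  | fwd | bwd | bi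
deriving DecidableEq, Inhabited

/-- The edge kind has an arrowhead at its left endpoint. -/
def EKind.arrowLeft : EKind → Prop
  | .fwd => False
  | .bwd => True
  | .bi  => True

/-- The edge kind has an arrowhead at its right endpoint. -/
def EKind.arrowRight : EKind → Prop
  | .fwd => True
  | .bwd => False
  | .bi  => True

/-- A mixed graph over a vertex type `V`: a set of directed edges and a set of
bidirected edges between distinct vertices. -/
structure MGraph (V : Type) where
  dir : V → V → Prop
  bidir : V → V → Prop
  dir_irrefl : ∀ x, ¬ dir x x
  bidir_irrefl : ∀ x, ¬ bidir x x
  bidir_symm : ∀ x y, bidir x y → bidir y x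

namespace MGraph

variable {V : Type}

/-- There is an edge of the given kind (read left-to-right) between `a` and `b`. -/
def edgeKind (G : MGraph V) : EKind → V → V → Prop
  | .fwd, a, b => G.dir a b
  | .bwd, a, b => G.dir b a
  | .bi,  a, b => G.bidir a b

/-- `x` is an ancestor of `y`: `x = y` or there is a directed path from `x` to `y`. -/
def Ancestor (G : MGraph V) : V → V → Prop := Relation.ReflTransGen G.dir

/-- The graph has no directed cycle. -/
def Acyclic (G : MGraph V) : Prop := ∀ x y, G.Ancestor x y → G.Ancestor y x → x = y

/-- `x` and `y` are adjacent: some edge joins them. -/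
def Adj (G : MGraph V) (x y : V) : Prop := G.dir x y ∨ G.dir y x ∨ G.bidir x y

/-- A path between `x` and `y`: a sequence of distinct vertices starting at `x` and
ending at `y`, together with, for each consecutive pair, an edge of the graph between
them (recorded by its kind). -/
structure Path (G : MGraph V) (x y : V) : Type where
  verts : List V
  kinds : List EKind
  len_eq : verts.length = kinds.length + 1
  nodup : verts.Nodup
  head_eq : verts.head? = some x
  last_eq : verts.getLast? = some y
  valid : ∀ i, i < kinds.length →
    G.edgeKind (kinds.getD i .fwd) (verts.getD i x) (verts.getD (i + 1) x)

namespace Path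

variable {G : MGraph V} {x y : V}

/-- The `i`-th vertex on the path. -/
def vert (p : G.Path x y) (i : ℕ) : V := p.verts.getD i x

/-- The kind of the `i`-th edge on the path. -/
def kind (p : G.Path x y) (i : ℕ) : EKind := p.kinds.getD i .fwd

/-- The (non-endpoint) vertex at position `i` is a collider on the path: both incident
edges have an arrowhead at it. -/
def ColliderAt (p : G.Path x y) (i : ℕ) : Prop :=
  1 ≤ i ∧ i + 1 < p.verts.length ∧
    (p.kind (i - 1)).arrowRight ∧ (p.kind i).arrowLeft

/-- The path is m-connecting given `Z`: every non-collider on it is not in `Z` and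
every collider on it has a descendant in `Z`. -/
def MConn (p : G.Path x y) (Z : Set V) : Prop :=
  ∀ i, 1 ≤ i → i + 1 < p.verts.length →
    (p.ColliderAt i → ∃ d ∈ Z, G.Ancestor (p.vert i) d) ∧
    (¬ p.ColliderAt i → p.vert i ∉ Z)

/-- The path is an inducing path: every non-endpoint vertex is a collider on the path
and an ancestor of one of the endpoints. -/
def Inducing (p : G.Path x y) : Prop :=
  ∀ i, 1 ≤ i → i + 1 < p.verts.length →
    p.ColliderAt i ∧ (G.Ancestor (p.vert i) x ∨ G.Ancestor (p.vert i) y)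

end Path

/-- Distinct vertices `x, y ∉ Z` are m-separated by `Z`: no path between them is
m-connecting given `Z`. -/
def MSep (G : MGraph V) (x y : V) (Z : Set V) : Prop :=
  x ≠ y ∧ x ∉ Z ∧ y ∉ Z ∧
    (∀ p : G.Path x y, ¬ p.MConn Z) ∧ (∀ p : G.Path y x, ¬ p.MConn Z)

/-- Sets `A` and `B` are m-separated by `C`: every `a ∈ A` and `b ∈ B` are. -/
def MSepSets (G : MGraph V) (A B C : Set V) : Prop :=
  ∀ a ∈ A, ∀ b ∈ B, G.MSep a b C

/-- `x` and `y` are virtually adjacent: there is an inducing path between them. -/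
def VAdj (G : MGraph V) (x y : V) : Prop :=
  x ≠ y ∧ ((∃ p : G.Path x y, p.Inducing) ∨ (∃ p : G.Path y x, p.Inducing))

/-- The graph `M` corresponding to an SMCM `S`: distinct `x, y` are adjacent in `M`
iff there is an inducing path between them in `S`, with the edge oriented `x → y` if
`x` is an ancestor of `y` in `S`, `y → x` if `y` is an ancestor of `x` in `S`, and
`x ↔ y` otherwise. -/
def mag (S : MGraph V) : MGraph V where
  dir x y := S.VAdj x y ∧ S.Ancestor x y
  bidir x y := S.VAdj x y ∧ ¬ S.Ancestor x y ∧ ¬ S.Ancestor y x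
  dir_irrefl := fun x h => h.1.1 rfl
  bidir_irrefl := fun x h => h.1.1 rfl
  bidir_symm := fun _ _ h => ⟨⟨h.1.1.symm, h.1.2.symm⟩, h.2.2, h.2.1⟩

/-- An ancestral graph: at most one edge between any two vertices, and whenever `x`
is an ancestor of `y`, no edge between `x` and `y` has an arrowhead at `x`. -/
def Ancestral (G : MGraph V) : Prop :=
  (∀ x y, G.Ancestor x y → x ≠ y → ¬ G.dir y x ∧ ¬ G.bidir x y) ∧
  (∀ x y, ¬ (G.dir x y ∧ G.bidir x y))

/-- A maximal ancestral graph: an ancestral graph in which every pair of non-adjacent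
vertices is m-separated by some subset of the remaining vertices. -/
def IsMAG (G : MGraph V) : Prop :=
  G.Ancestral ∧ ∀ x y : V, x ≠ y → ¬ G.Adj x y →
    ∃ Z : Set V, x ∉ Z ∧ y ∉ Z ∧ G.MSep x y Z

/-- The number of edges of a mixed graph (directed edges plus bidirected edges, the
latter counted as unordered pairs). -/
noncomputable def numEdges (G : MGraph V) : ℕ :=
  {p : V × V | G.dir p.1 p.2}.ncard +
    {e : Sym2 V | ∃ a b, e = s(a, b) ∧ G.bidir a b}.ncard

/-- The number of virtual adjacencies (unordered pairs of virtually adjacent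
vertices). -/
noncomputable def numVAdj (G : MGraph V) : ℕ :=
  {e : Sym2 V | ∃ a b, e = s(a, b) ∧ G.VAdj a b}.ncard

/-- The number of m-separation statements entailed by the graph: triples `(X, Y, Z)`
of pairwise disjoint subsets with `X, Y` nonempty such that `X` and `Y` are
m-separated by `Z`. -/
noncomputable def numSep (G : MGraph V) : ℕ :=
  {t : Set V × Set V × Set V | t.1.Nonempty ∧ t.2.1.Nonempty ∧
    Disjoint t.1 t.2.1 ∧ Disjoint t.1 t.2.2 ∧ Disjoint t.2.1 t.2.2 ∧
    G.MSepSets t.1 t.2.1 t.2.2}.ncard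

/-- An unshielded triple `⟨a, z, b⟩`: `a, z` adjacent, `z, b` adjacent, `a, b` not
adjacent. -/
def UnshieldedTriple (G : MGraph V) (a z b : V) : Prop :=
  a ≠ z ∧ z ≠ b ∧ a ≠ b ∧ G.Adj a z ∧ G.Adj z b ∧ ¬ G.Adj a b

/-- Some edge between `a` and `z` has an arrowhead at `z`. -/
def ArrowAt (G : MGraph V) (a z : V) : Prop := G.dir a z ∨ G.bidir a z

/-- An unshielded collider: an unshielded triple whose two edges both have arrowheads
at the middle vertex. -/
def UnshieldedCollider (G : MGraph V) (a z b : V) : Prop :=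
  G.UnshieldedTriple a z b ∧ G.ArrowAt a z ∧ G.ArrowAt b z

/-- A discriminating path for `⟨X, Z, Y⟩`: a path `(V₀, V₁, ..., Vₘ = X, Z, Y)` with
`m ≥ 1` such that `V₀` and `Y` are not adjacent and every `Vᵢ` with `1 ≤ i ≤ m` is a
collider on the path and a parent of `Y`. -/
def IsDiscriminating (G : MGraph V) {v₀ w : V} (p : G.Path v₀ w) (X Z Y : V) : Prop :=
  4 ≤ p.verts.length ∧ w = Y ∧
  p.vert (p.verts.length - 3) = X ∧
  p.vert (p.verts.length - 2) = Z ∧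
  v₀ ≠ Y ∧ ¬ G.Adj v₀ Y ∧
  ∀ i, 1 ≤ i → i ≤ p.verts.length - 3 → p.ColliderAt i ∧ G.dir (p.vert i) Y

end MGraph

/-- An independence model over `V`: a set of triples `(X, Y, Z)` of pairwise disjoint
subsets of `V` with `X, Y` nonempty. -/
def IsIndepModel {V : Type} (I : Set (Set V × Set V × Set V)) : Prop :=
  ∀ t ∈ I, t.1.Nonempty ∧ t.2.1.Nonempty ∧
    Disjoint t.1 t.2.1 ∧ Disjoint t.1 t.2.2 ∧ Disjoint t.2.1 t.2.2

/-- `G` satisfies the Markov assumption with `I`: every triple `(X, Y, Z)` such that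
`X` and `Y` are m-separated by `Z` in `G` belongs to `I`. -/
def Markov {V : Type} (G : MGraph V) (I : Set (Set V × Set V × Set V)) : Prop :=
  ∀ X Y Z : Set V, X.Nonempty → Y.Nonempty →
    Disjoint X Y → Disjoint X Z → Disjoint Y Z →
    G.MSepSets X Y Z → (X, Y, Z) ∈ I

/-- `G` satisfies the Faithfulness assumption with `I`: every triple in `I` is
m-separated in `G`. -/
def Faithful {V : Type} (G : MGraph V) (I : Set (Set V × Set V × Set V)) : Prop :=
  ∀ X Y Z : Set V, (X, Y, Z) ∈ I → G.MSepSets X Y Z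

/-- `G` satisfies the Adjacency-faithfulness assumption with `I`: for adjacent
distinct `x, y` and any `Z ⊆ V ∖ {x, y}`, the triple `({x}, {y}, Z)` is not in `I`. -/
def AdjFaithful {V : Type} (G : MGraph V) (I : Set (Set V × Set V × Set V)) : Prop :=
  ∀ x y : V, x ≠ y → G.Adj x y →
    ∀ Z : Set V, x ∉ Z → y ∉ Z → ({x}, {y}, Z) ∉ I

/-- `G` satisfies the V-adjacency-faithfulness assumption with `I`: for virtually
adjacent `x, y` and any `Z ⊆ V ∖ {x, y}`, the triple `({x}, {y}, Z)` is not in `I`. -/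
def VAdjFaithful {V : Type} (G : MGraph V) (I : Set (Set V × Set V × Set V)) : Prop :=
  ∀ x y : V, G.VAdj x y →
    ∀ Z : Set V, x ∉ Z → y ∉ Z → ({x}, {y}, Z) ∉ I

/-- A MAG `G` is NoE-minimal with `I`: no MAG over `V` with strictly fewer edges
satisfies the Markov assumption with `I`. -/
def NoEMinimalMAG {V : Type} (G : MGraph V) (I : Set (Set V × Set V × Set V)) : Prop :=
  ¬ ∃ G' : MGraph V, G'.IsMAG ∧ G'.numEdges < G.numEdges ∧ Markov G' I

/-- An SMCM `G` is NoE-minimal with `I`: no SMCM over `V` with strictly fewer edges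
satisfies the Markov assumption with `I`. -/
def NoEMinimalSMCM {V : Type} (G : MGraph V) (I : Set (Set V × Set V × Set V)) : Prop :=
  ¬ ∃ G' : MGraph V, G'.Acyclic ∧ G'.numEdges < G.numEdges ∧ Markov G' I

/-- An SMCM `G` is V-adjacency-minimal with `I`: no SMCM over `V` with strictly fewer
virtual adjacencies satisfies the Markov assumption with `I`. -/
def VAdjMinimal {V : Type} (G : MGraph V) (I : Set (Set V × Set V × Set V)) : Prop :=
  ¬ ∃ G' : MGraph V, G'.Acyclic ∧ G'.numVAdj < G.numVAdj ∧ Markov G' I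

/-- A MAG `G` is NoI-minimal with `I`: no MAG over `V` entailing strictly more
m-separation statements satisfies the Markov assumption with `I`. -/
def NoIMinimalMAG {V : Type} (G : MGraph V) (I : Set (Set V × Set V × Set V)) : Prop :=
  ¬ ∃ G' : MGraph V, G'.IsMAG ∧ G.numSep < G'.numSep ∧ Markov G' I

/-- An SMCM `G` is NoI-minimal with `I`: no SMCM over `V` entailing strictly more
m-separation statements satisfies the Markov assumption with `I`. -/
def NoIMinimalSMCM {V : Type} (G : MGraph V) (I : Set (Set V × Set V × Set V)) : Prop :=
  ¬ ∃ G' : MGraph V, G'.Acyclic ∧ G.numSep < G'.numSep ∧ Markov G' I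


/-!
Markov for `G` and faithfulness for `G_F` put every m-separation statement of `G` among those
of `G_F`. NoI-minimality of `G` forbids `G_F` from entailing strictly more of them, and over a
finite vertex set an inclusion of sets with no increase in cardinality is an equality.
-/

namespace MGraph

variable {V : Type}

def sepStatements (G : MGraph V) : Set (Set V × Set V × Set V) :=
  {t | t.1.Nonempty ∧ t.2.1.Nonempty ∧
    Disjoint t.1 t.2.1 ∧ Disjoint t.1 t.2.2 ∧ Disjoint t.2.1 t.2.2 ∧
    G.MSepSets t.1 t.2.1 t.2.2}

theorem numSep_eq_ncard_sepStatements (G : MGraph V) : G.numSep = G.sepStatements.ncard := rfl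

theorem sepStatements_subset {G G' : MGraph V} {I : Set (Set V × Set V × Set V)}
    (hM : Markov G I) (hF : Faithful G' I) : G.sepStatements ⊆ G'.sepStatements := by
  rintro ⟨X, Y, Z⟩ ⟨hX, hY, hXY, hXZ, hYZ, hsep⟩
  exact ⟨hX, hY, hXY, hXZ, hYZ, hF X Y Z (hM X Y Z hX hY hXY hXZ hYZ hsep)⟩

theorem sepStatements_eq_of_noIMinimalMAG [Finite V] {G G' : MGraph V}
    {I : Set (Set V × Set V × Set V)} (hmin : NoIMinimalMAG G I) (hG' : G'.IsMAG)
    (hM' : Markov G' I) (hsub : G.sepStatements ⊆ G'.sepStatements) :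
    G.sepStatements = G'.sepStatements := by
  have hcard : G'.sepStatements.ncard ≤ G.sepStatements.ncard :=
    not_lt.mp fun hlt => hmin ⟨G', hG', by rwa [numSep_eq_ncard_sepStatements,
      numSep_eq_ncard_sepStatements], hM'⟩
  exact Set.eq_of_subset_of_ncard_le hsub hcard (Set.toFinite _)

theorem mSepSets_iff_of_sepStatements_eq {G G' : MGraph V}
    (h : G.sepStatements = G'.sepStatements) {X Y Z : Set V} (hX : X.Nonempty)
    (hY : Y.Nonempty) (hXY : Disjoint X Y) (hXZ : Disjoint X Z) (hYZ : Disjoint Y Z) :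
    G.MSepSets X Y Z ↔ G'.MSepSets X Y Z := by
  have hmem : ∀ H : MGraph V, (X, Y, Z) ∈ H.sepStatements ↔ H.MSepSets X Y Z := fun _ =>
    ⟨fun ht => ht.2.2.2.2.2, fun hsep => ⟨hX, hY, hXY, hXZ, hYZ, hsep⟩⟩
  rw [← hmem G, ← hmem G', h]

end MGraph

open MGraph in
theorem statement_16_general {V : Type} [Fintype V]
    (I : Set (Set V × Set V × Set V)) (hI : IsIndepModel I)
    (GF : MGraph V) (hGF : GF.IsMAG) (hMF : Markov GF I) (hFF : Faithful GF I)
    (G : MGraph V) (hM : Markov G I) (hmin : NoIMinimalMAG G I) :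
    (∀ X Y Z : Set V, X.Nonempty → Y.Nonempty →
      Disjoint X Y → Disjoint X Z → Disjoint Y Z →
      (G.MSepSets X Y Z ↔ GF.MSepSets X Y Z)) ∧
    Faithful G I := by
  have heq := sepStatements_eq_of_noIMinimalMAG hmin hGF hMF (sepStatements_subset hM hFF)
  have hiff : ∀ X Y Z : Set V, X.Nonempty → Y.Nonempty →
      Disjoint X Y → Disjoint X Z → Disjoint Y Z → (G.MSepSets X Y Z ↔ GF.MSepSets X Y Z) :=
    fun _ _ _ => mSepSets_iff_of_sepStatements_eq heq
  refine ⟨hiff, fun X Y Z hXYZ => ?_⟩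
  obtain ⟨hX, hY, hXY, hXZ, hYZ⟩ := hI _ hXYZ
  exact (hiff X Y Z hX hY hXY hXZ hYZ).2 (hFF X Y Z hXYZ)

/-- If `G_F` is a MAG satisfying Markov and Faithfulness with `I`, and
`G` is a MAG satisfying Markov with `I` that is NoI-minimal with `I`, then `G` and
`G_F` entail exactly the same m-separation statements; in particular, `G` satisfies
Faithfulness with `I`. -/
theorem statement_16 {V : Type} [Fintype V] [DecidableEq V]
    (I : Set (Set V × Set V × Set V)) (hI : IsIndepModel I)
    (GF : MGraph V) (hGF : GF.IsMAG) (hMF : Markov GF I) (hFF : Faithful GF I)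
    (G : MGraph V) (hG : G.IsMAG) (hM : Markov G I) (hmin : NoIMinimalMAG G I) :
    (∀ X Y Z : Set V, X.Nonempty → Y.Nonempty →
      Disjoint X Y → Disjoint X Z → Disjoint Y Z →
      (G.MSepSets X Y Z ↔ GF.MSepSets X Y Z)) ∧
    Faithful G I :=
  statement_16_general I hI GF hGF hMF hFF G hM hmin
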